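/- arXiv:2206.02560 — 3 statements merged into one kernel-verified Lean document; each statement's English description precedes it below -/
import Mathlib

section
/- Let M be an even lattice, and let H, H' ⊆ A_M be isotropic cyclic subgroups of order d with H ∩ H' = 0 and A_M = H ⊕ H', where the ℚ/ℤ-valued pairing restricts to a perfect pairing between H and H'. Then H' is the unique isotropic subgroup of A_M isomorphic to ℤ/dℤ meeting H trivially: if H'' ≅ ℤ/dℤ is isotropic with H ∩ H'' = 0, then H'' = H'. -/
/-! A generator `z` of the cyclic group `H''` splits as `z = x + y` with `x ∈ H`, `y ∈ H'`.
Since `H`, `H'`, `H''` are isotropic, `2 b(x, y) = q(z) - q(x) - q(y) = 0`, so `b(x, y) = 0`.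
Counting shows that `H''`, like `H'`, is a complement of `H`; hence every element of `H'` is a
multiple of `y`, so `b(x, -)` vanishes on `H'` and perfectness forces `x = 0`. Thus `z ∈ H'`,
and `H'' = H'` as both have order `d`. -/

/-- The homomorphism `ℚ/ℤ → ℚ/2ℤ` induced by multiplication by `2`. -/
noncomputable def doubleHom : AddCircle (1 : ℚ) →+ AddCircle (2 : ℚ) :=
  QuotientAddGroup.lift _
    ((QuotientAddGroup.mk' (AddSubgroup.zmultiples (2 : ℚ))).comp
      (zsmulAddGroupHom 2)) (by
    intro x hx
    obtain ⟨n, rfl⟩ := hx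
    simp only [AddMonoidHom.mem_ker, AddMonoidHom.comp_apply, QuotientAddGroup.mk'_apply,
      QuotientAddGroup.eq_zero_iff]
    exact ⟨n, by simp [zsmulAddGroupHom]; ring⟩)

theorem doubleHom_injective : Function.Injective doubleHom := by
  refine (injective_iff_map_eq_zero doubleHom).2 fun t ht => ?_
  induction t using QuotientAddGroup.induction_on with
  | H r =>
    obtain ⟨n, hn⟩ := (QuotientAddGroup.eq_zero_iff _).1 ht
    refine (QuotientAddGroup.eq_zero_iff _).2 ⟨n, ?_⟩
    have : (n : ℚ) * 2 = 2 * r := by simpa [zsmul_eq_mul] using hn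
    push_cast [zsmul_eq_mul]
    linarith

theorem pairing_eq_zero_of_isotropic {A : Type*} [AddCommGroup A]
    {q : A → AddCircle (2 : ℚ)} {b : A →+ A →+ AddCircle (1 : ℚ)}
    (hqb : ∀ x y : A, q (x + y) = q x + q y + doubleHom (b x y)) {x y : A}
    (hx : q x = 0) (hy : q y = 0) (hxy : q (x + y) = 0) : b x y = 0 :=
  doubleHom_injective <| by simpa [hx, hy, hxy, eq_comm] using hqb x y

namespace AddSubgroup

variable {A : Type*} [AddCommGroup A]

theorem relIndex_eq_natCard_of_disjoint {H L : AddSubgroup A} (h : Disjoint H L) :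
    H.relIndex L = Nat.card L := by
  rw [relIndex, addSubgroupOf_eq_bot.2 h, index_bot]

theorem isCompl_of_disjoint_of_natCard_eq [Finite A] {H K L : AddSubgroup A}
    (hK : IsCompl H K) (hL : Disjoint H L) (hcard : Nat.card L = Nat.card K) : IsCompl H L := by
  have hrel : H.relIndex (H ⊔ L) = H.index := by
    rw [relIndex_sup_left, relIndex_eq_natCard_of_disjoint hL, hcard,
      ← relIndex_eq_natCard_of_disjoint hK.disjoint, ← relIndex_sup_left, hK.sup_eq_top,
      relIndex_top_right]
  have hindex : (H ⊔ L).index = 1 := by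
    have := relIndex_mul_index (le_sup_left : H ≤ H ⊔ L)
    rw [hrel] at this
    exact (Nat.mul_eq_left H.index_ne_zero_of_finite).1 this
  exact ⟨hL, codisjoint_iff.2 (index_eq_one.1 hindex)⟩

theorem le_zmultiples_of_sup_zmultiples_add_eq_top {H K : AddSubgroup A} (hHK : Disjoint H K)
    {x y : A} (hx : x ∈ H) (hy : y ∈ K) (htop : H ⊔ zmultiples (x + y) = ⊤) :
    K ≤ zmultiples y := by
  intro k hk
  obtain ⟨h, hh, _, ⟨n, rfl⟩, rfl⟩ := mem_sup.1 (htop ▸ mem_top k)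
  replace hk : h + (n • x + n • y) ∈ K := by simpa only [zsmul_add] using hk
  simp only [zsmul_add]
  have hmem : h + n • x ∈ H ⊓ K := by
    have hK : h + n • x = h + (n • x + n • y) - n • y := by abel
    exact mem_inf.2 ⟨add_mem hh (zsmul_mem hx n), hK ▸ sub_mem hk (zsmul_mem hy n)⟩
  rw [disjoint_iff.1 hHK, mem_bot] at hmem
  rw [← add_assoc, hmem, zero_add]
  exact zsmul_mem (mem_zmultiples y) n

end AddSubgroup

theorem stmt7_general {A : Type*} [AddCommGroup A] [Fintype A]
    (q : A → AddCircle (2 : ℚ)) (b : A →+ A →+ AddCircle (1 : ℚ))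
    (hqb : ∀ x y : A, q (x + y) = q x + q y + doubleHom (b x y))
    (d : ℕ)
    (H H' : AddSubgroup A)
    (hH'cyc : Nonempty (H' ≃+ ZMod d))
    (hHiso : ∀ x ∈ H, q x = 0) (hH'iso : ∀ x ∈ H', q x = 0)
    (hmeet : H ⊓ H' = ⊥) (hsum : H ⊔ H' = ⊤)
    (hperf : Function.Bijective fun x : H => (b (x : A)).comp H'.subtype) :
    ∀ H'' : AddSubgroup A, Nonempty (H'' ≃+ ZMod d) → (∀ x ∈ H'', q x = 0) →
      H ⊓ H'' = ⊥ → H'' = H' := by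
  rintro H'' ⟨e⟩ hH''iso hmeet''
  obtain ⟨e'⟩ := hH'cyc
  obtain ⟨z, rfl⟩ :=
    H''.isAddCyclic_iff_exists_zmultiples_eq_top.1 (e.isAddCyclic.2 inferInstance)
  have hcard : Nat.card (AddSubgroup.zmultiples z) = Nat.card H' := by
    rw [Nat.card_congr e.toEquiv, Nat.card_congr e'.toEquiv]
  have hcompl := AddSubgroup.isCompl_of_disjoint_of_natCard_eq
    ⟨disjoint_iff.2 hmeet, codisjoint_iff.2 hsum⟩ (disjoint_iff.2 hmeet'') hcard
  obtain ⟨x, hx, y, hy, rfl⟩ := AddSubgroup.mem_sup.1 (hsum ▸ AddSubgroup.mem_top z)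
  have hbxy : b x y = 0 := pairing_eq_zero_of_isotropic hqb (hHiso x hx) (hH'iso y hy)
    (hH''iso _ (AddSubgroup.mem_zmultiples _))
  have hH'y := AddSubgroup.le_zmultiples_of_sup_zmultiples_add_eq_top
    (disjoint_iff.2 hmeet) hx hy hcompl.sup_eq_top
  have hx0 : x = 0 := by
    refine congrArg Subtype.val (hperf.injective (a₁ := ⟨x, hx⟩) (a₂ := 0) ?_)
    ext ⟨w, hw⟩
    obtain ⟨n, rfl⟩ := hH'y hw
    simp [hbxy]
  refine AddSubgroup.eq_of_le_of_card_ge ?_ hcard.ge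
  rw [hx0, zero_add, AddSubgroup.zmultiples_le]
  exact hy

/-- Let `M` be an even lattice with discriminant group `A = A_M`, carrying
the discriminant quadratic form `q : A → ℚ/2ℤ` and pairing `b : A × A → ℚ/ℤ` with
`q(x+y) = q(x) + q(y) + 2·b(x,y)`.  If `H, H' ⊆ A` are isotropic cyclic subgroups of
order `d` with `H ∩ H' = 0`, `A = H ⊕ H'`, and the pairing restricts to a perfect
pairing between `H` and `H'`, then `H'` is the unique isotropic subgroup of `A`
isomorphic to `ℤ/dℤ` meeting `H` trivially. -/
theorem stmt7 {A : Type*} [AddCommGroup A] [Fintype A]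
    (q : A → AddCircle (2 : ℚ)) (b : A →+ A →+ AddCircle (1 : ℚ))
    (hbsymm : ∀ x y : A, b x y = b y x)
    (hqb : ∀ x y : A, q (x + y) = q x + q y + doubleHom (b x y))
    (d : ℕ) (hd : 1 < d)
    (H H' : AddSubgroup A)
    (hHcyc : Nonempty (H ≃+ ZMod d)) (hH'cyc : Nonempty (H' ≃+ ZMod d))
    (hHiso : ∀ x ∈ H, q x = 0) (hH'iso : ∀ x ∈ H', q x = 0)
    (hmeet : H ⊓ H' = ⊥) (hsum : H ⊔ H' = ⊤)
    (hperf : Function.Bijective fun x : H => (b (x : A)).comp H'.subtype) :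
    ∀ H'' : AddSubgroup A, Nonempty (H'' ≃+ ZMod d) → (∀ x ∈ H'', q x = 0) →
      H ⊓ H'' = ⊥ → H'' = H' :=
  stmt7_general q b hqb d H H' hH'cyc hHiso hH'iso hmeet hsum hperf
end

section
/- Let L be an even ℤ-lattice and L' an even lattice in L⊗ℚ, and let d = [L : L∩L'] = [L' : L∩L'] with d coprime to disc(L) (so L and L' are d-neighbors in the generalized sense that indices agree). If moreover L and L' have equal discriminant, then there is a natural isomorphism of discriminant groups A_L ≅ A_{L'}: precisely, writing M = L∩L' and Hᵢ the images of L, L' in A_M, the composite maps H₁^⊥/H₁ ≅ A_M/(H₁⊕H₂) ≅ H₂^⊥/H₂ yield an isomorphism A_L ≅ A_{L'}, provided |H₁| = |H₂| is coprime to disc(L). -/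
/-- The dual lattice `M^∨ = {x ∈ V : (x, M) ⊆ ℤ}` of a `ℤ`-lattice `M` in a rational
quadratic space `(V, B)`. -/
def dualLattice {V : Type*} [AddCommGroup V] [Module ℚ V]
    (B : V →ₗ[ℚ] V →ₗ[ℚ] ℚ) (M : Submodule ℤ V) : Submodule ℤ V where
  carrier := {x | ∀ m ∈ M, ∃ n : ℤ, B x m = (n : ℚ)}
  zero_mem' := fun m _ => ⟨0, by simp⟩
  add_mem' := by
    rintro a c ha hc m hm
    obtain ⟨n, hn⟩ := ha m hm
    obtain ⟨k, hk⟩ := hc m hm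
    exact ⟨n + k, by rw [map_add, LinearMap.add_apply, hn, hk]; push_cast; ring⟩
  smul_mem' := by
    rintro t x hx m hm
    obtain ⟨n, hn⟩ := hx m hm
    refine ⟨t * n, ?_⟩
    rw [map_zsmul, LinearMap.smul_apply, hn, zsmul_eq_mul]
    push_cast; ring

/-!
Nikulin's composite `A_L ≅ A_M/(H₁ ⊕ H₂) ≅ A_{L'}` is the second isomorphism theorem applied
twice: once `L^∨ ∩ (L + L') = L`, `L'^∨ ∩ (L + L') = L'` and
`L^∨ + (L + L') = L'^∨ + (L + L')` are known, both `A_L` and `A_{L'}` are identified with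
`(L^∨ + L + L')/(L + L')`.
All three come from two facts: `d • (L + L') ⊆ L ∩ L'`, and for `x ∈ L^∨` the vector `N • x`
agrees on `L` with some `l ∈ L` (apply the adjugate of the integral Gram matrix). Writing
`a d + c N = 1`: if moreover `x ∈ L + L'` then `N • x = l` by nondegeneracy, so
`x = a • d • x + c • N • x ∈ L`; in general `x - c • l` pairs with `y ∈ L'` like `a d x` does,
i.e. integrally, so it lies in `L'^∨`.
-/

theorem Submodule.exists_quotientEquiv_of_inf_eq_of_sup_eq {R M : Type*} [Ring R]
    [AddCommGroup M] [Module R M] {X Y S T U : Submodule R M}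
    (hXU : X ⊓ U = S) (hYU : Y ⊓ U = T) (hXY : X ⊔ U = Y ⊔ U) :
    ∃ e : (X ⧸ S.comap X.subtype) ≃ₗ[R] (Y ⧸ T.comap Y.subtype),
      ∀ (x : X) (y : Y), (x : M) - y ∈ U →
        e (Submodule.Quotient.mk x) = Submodule.Quotient.mk y := by
  set fX := U.mkQ ∘ₗ X.subtype
  set fY := U.mkQ ∘ₗ Y.subtype
  have hkerX : S.comap X.subtype = LinearMap.ker fX := by
    rw [LinearMap.ker_comp, Submodule.ker_mkQ, ← hXU, Submodule.comap_inf,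
      Submodule.comap_subtype_self, top_inf_eq]
  have hkerY : T.comap Y.subtype = LinearMap.ker fY := by
    rw [LinearMap.ker_comp, Submodule.ker_mkQ, ← hYU, Submodule.comap_inf,
      Submodule.comap_subtype_self, top_inf_eq]
  have hrange : LinearMap.range fX = LinearMap.range fY := by
    simp only [fX, fY, LinearMap.range_comp, Submodule.range_subtype]
    apply Submodule.comap_injective_of_surjective U.mkQ_surjective
    rw [Submodule.comap_map_mkQ, Submodule.comap_map_mkQ, sup_comm, hXY, sup_comm]
  refine ⟨(Submodule.quotEquivOfEq _ _ hkerX).trans ((fX.quotKerEquivRange).trans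
    ((LinearEquiv.ofEq _ _ hrange).trans ((fY.quotKerEquivRange.symm).trans
      (Submodule.quotEquivOfEq _ _ hkerY.symm)))), fun x y hxy => ?_⟩
  have himage : LinearEquiv.ofEq _ _ hrange (fX.quotKerEquivRange (Submodule.Quotient.mk x))
      = ⟨fY y, LinearMap.mem_range_self fY y⟩ :=
    Subtype.ext ((Submodule.Quotient.eq U).mpr hxy)
  simp only [LinearEquiv.trans_apply, Submodule.quotEquivOfEq_mk, himage,
    LinearMap.quotKerEquivRange_symm_apply_image, Submodule.mkQ_apply]

theorem smul_mem_of_nonempty_addEquiv_zmod {M : Type*} [AddCommGroup M] {P R : Submodule ℤ M}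
    {n : ℕ} (h : Nonempty ((P ⧸ R.comap P.subtype) ≃+ ZMod n)) {x : M} (hx : x ∈ P) :
    (n : ℤ) • x ∈ R := by
  obtain ⟨e⟩ := h
  have hmem : (n : ℤ) • (⟨x, hx⟩ : P) ∈ R.comap P.subtype := by
    rw [← Submodule.Quotient.mk_eq_zero]
    apply e.injective
    rw [Submodule.Quotient.mk_smul, map_zsmul, map_zero, natCast_zsmul, nsmul_eq_mul,
      ZMod.natCast_self, zero_mul]
  exact hmem

section Lattice

open Matrix

variable {ι V : Type*} [AddCommGroup V] [Module ℚ V] {B : V →ₗ[ℚ] V →ₗ[ℚ] ℚ}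
  {P Q : Submodule ℤ V}

theorem le_dualLattice_of_even (hsymm : ∀ x y : V, B x y = B y x)
    (heven : ∀ x ∈ P, ∃ n : ℤ, B x x = 2 * n) : P ≤ dualLattice B P := by
  intro x hx y hy
  obtain ⟨n₁, h₁⟩ := heven x hx
  obtain ⟨n₂, h₂⟩ := heven y hy
  obtain ⟨n₃, h₃⟩ := heven (x + y) (P.add_mem hx hy)
  refine ⟨n₃ - n₁ - n₂, ?_⟩
  simp only [map_add, LinearMap.add_apply, hsymm y x] at h₃
  push_cast
  linarith

variable (B) in
noncomputable def gramMatrix (b : Module.Basis ι ℤ P) : Matrix ι ι ℚ :=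
  Matrix.of fun i j => B (b i) (b j)

theorem Module.Basis.apply_eq_of_forall_apply_basis_eq (b : Module.Basis ι ℤ P)
    {f g : V →ₗ[ℚ] ℚ} (h : ∀ j, f (b j) = g (b j)) {w : V} (hw : w ∈ P) : f w = g w :=
  LinearMap.congr_fun (b.ext (f₁ := (f.restrictScalars ℤ).comp P.subtype)
    (f₂ := (g.restrictScalars ℤ).comp P.subtype) h) ⟨w, hw⟩

theorem exists_intMatrix_map_eq_gramMatrix (hP : P ≤ dualLattice B P) (b : Module.Basis ι ℤ P) :
    ∃ G : Matrix ι ι ℤ, G.map Int.cast = gramMatrix B b := by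
  choose G hG using fun i j => hP (b i).2 (b j) (b j).2
  exact ⟨Matrix.of G, by ext i j; simp [gramMatrix, hG]⟩

variable [Fintype ι]

theorem apply_sum_smul_basis_eq_vecMul_gramMatrix (b : Module.Basis ι ℤ P) (c : ι → ℤ) (j : ι) :
    B (∑ i, c i • (b i : V)) (b j) = ((Int.cast ∘ c : ι → ℚ) ᵥ* gramMatrix B b) j := by
  simp only [map_sum, map_zsmul, LinearMap.sum_apply, LinearMap.smul_apply, zsmul_eq_mul,
    vecMul, dotProduct, gramMatrix, of_apply, Function.comp_apply]

variable [DecidableEq ι]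

theorem exists_mem_forall_apply_eq_det_mul (hP : P ≤ dualLattice B P) (b : Module.Basis ι ℤ P)
    {x : V} (hx : x ∈ dualLattice B P) :
    ∃ l ∈ P, ∀ w ∈ P, B l w = (gramMatrix B b).det * B x w := by
  obtain ⟨G, hG⟩ := exists_intMatrix_map_eq_gramMatrix hP b
  choose v hv using fun j => hx (b j) (b j).2
  refine ⟨∑ i, (v ᵥ* G.adjugate) i • (b i : V),
    Submodule.sum_mem _ fun i _ => P.smul_mem _ (b i).2, fun w hw => ?_⟩
  refine b.apply_eq_of_forall_apply_basis_eq (g := (gramMatrix B b).det • B x) (fun j => ?_) hw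
  have hcast := RingHom.map_vecMul (Int.castRingHom ℚ) G (v ᵥ* G.adjugate) j
  simp only [Int.coe_castRingHom] at hcast
  rw [apply_sum_smul_basis_eq_vecMul_gramMatrix, ← hG, ← hcast, vecMul_vecMul, adjugate_mul,
    vecMul_smul, vecMul_one, LinearMap.smul_apply, hv, ← Int.cast_det]
  simp

theorem eq_zero_of_mem_of_forall_apply_eq_zero (b : Module.Basis ι ℤ P)
    (hdet : (gramMatrix B b).det ≠ 0) {u : V} (hu : u ∈ P) (horth : ∀ w ∈ P, B u w = 0) :
    u = 0 := by
  set c := b.repr ⟨u, hu⟩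
  have hsum : ∑ i, c i • (b i : V) = u := by
    simpa only [Submodule.coe_sum, Submodule.coe_smul] using
      congrArg Subtype.val (b.sum_repr ⟨u, hu⟩)
  have hc : (Int.cast ∘ c : ι → ℚ) = 0 :=
    eq_zero_of_vecMul_eq_zero hdet <| funext fun j => by
      rw [← apply_sum_smul_basis_eq_vecMul_gramMatrix, hsum]
      exact horth _ (b j).2
  have hc' : ∀ i, c i = 0 := fun i => by simpa using congrFun hc i
  simp [← hsum, hc']

theorem det_smul_mem_of_mem_dualLattice_of_smul_mem (hP : P ≤ dualLattice B P)
    (b : Module.Basis ι ℤ P) {N : ℤ} (hN : (N : ℚ) = (gramMatrix B b).det) (hN0 : N ≠ 0)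
    {x : V} (hx : x ∈ dualLattice B P) {k : ℤ} (hk : k ≠ 0) (hkx : k • x ∈ P) : N • x ∈ P := by
  obtain ⟨l, hl, hlx⟩ := exists_mem_forall_apply_eq_det_mul hP b hx
  have hzero : k • (l - N • x) = 0 := by
    refine eq_zero_of_mem_of_forall_apply_eq_zero b (hN ▸ Int.cast_ne_zero.mpr hN0) ?_ ?_
    · rw [smul_sub, smul_comm]
      exact P.sub_mem (P.smul_mem k hl) (P.smul_mem N hkx)
    · intro w hw
      simp [hlx w hw, ← hN]
  rw [← Int.cast_smul_eq_zsmul ℚ, smul_eq_zero, sub_eq_zero] at hzero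
  exact hzero.resolve_left (Int.cast_ne_zero.mpr hk) ▸ hl

theorem dualLattice_inf_sup_eq (hP : P ≤ dualLattice B P) (b : Module.Basis ι ℤ P) {N : ℤ}
    (hN : (N : ℚ) = (gramMatrix B b).det) (hN0 : N ≠ 0) {d : ℤ} (hd : d ≠ 0)
    (hcop : IsCoprime d N) (hQP : ∀ y ∈ Q, d • y ∈ P) : dualLattice B P ⊓ (P ⊔ Q) = P := by
  refine le_antisymm (fun x ⟨hx, hxPQ⟩ => ?_) (le_inf hP le_sup_left)
  have hdx : d • x ∈ P := by
    obtain ⟨p, hp, q, hq, rfl⟩ := Submodule.mem_sup.mp hxPQ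
    rw [smul_add]
    exact P.add_mem (P.smul_mem d hp) (hQP q hq)
  have hNx := det_smul_mem_of_mem_dualLattice_of_smul_mem hP b hN hN0 hx hd hdx
  obtain ⟨a, c, hac⟩ := hcop
  have hx_eq : x = a • d • x + c • N • x := by
    rw [smul_smul, smul_smul, ← add_smul, hac, one_smul]
  rw [hx_eq]
  exact P.add_mem (P.smul_mem a hdx) (P.smul_mem c hNx)

theorem dualLattice_le_dualLattice_sup (hP : P ≤ dualLattice B P) (b : Module.Basis ι ℤ P)
    {N : ℤ} (hN : (N : ℚ) = (gramMatrix B b).det) {d : ℤ} (hd : d ≠ 0)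
    (hcop : IsCoprime d N) (hQP : ∀ y ∈ Q, d • y ∈ P) :
    dualLattice B P ≤ dualLattice B Q ⊔ P := by
  intro x hx
  obtain ⟨l, hl, hlx⟩ := exists_mem_forall_apply_eq_det_mul hP b hx
  obtain ⟨a, c, hac⟩ := hcop
  refine Submodule.mem_sup.mpr
    ⟨x - c • l, fun m hm => ?_, c • l, P.smul_mem c hl, sub_add_cancel x _⟩
  obtain ⟨k, hk⟩ := hx (d • m) (hQP m hm)
  refine ⟨a * k, mul_left_cancel₀ (Int.cast_ne_zero.mpr hd : (d : ℚ) ≠ 0) ?_⟩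
  have hac' : (a : ℚ) * d + c * N = 1 := by exact_mod_cast hac
  have hexpand : (d : ℚ) * B (x - c • l) m = B x (d • m) - c * B l (d • m) := by
    simp only [map_sub, map_zsmul, LinearMap.sub_apply, LinearMap.smul_apply, zsmul_eq_mul]
    ring
  rw [hexpand, hlx (d • m) (hQP m hm), ← hN, hk]
  push_cast
  linear_combination (-k : ℚ) * hac'

end Lattice

theorem stmt8_general {ι V : Type*} [Fintype ι] [DecidableEq ι] [AddCommGroup V] [Module ℚ V]
    (B : V →ₗ[ℚ] V →ₗ[ℚ] ℚ)
    (hsymm : ∀ x y : V, B x y = B y x)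
    (L L' : Submodule ℤ V)
    (hLeven : ∀ x ∈ L, ∃ n : ℤ, B x x = 2 * n)
    (hL'even : ∀ x ∈ L', ∃ n : ℤ, B x x = 2 * n)
    (bL : Module.Basis ι ℤ L) (bL' : Module.Basis ι ℤ L')
    (N : ℤ) (hN : (N : ℚ) = (Matrix.of fun i j => B (bL i : V) (bL j : V)).det)
    (hdisc : (Matrix.of fun i j => B (bL i : V) (bL j : V)).det
      = (Matrix.of fun i j => B (bL' i : V) (bL' j : V)).det)
    (d : ℕ) (hd : 1 < d) (hcop : IsCoprime (d : ℤ) N)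
    (hquotL : Nonempty ((↥L ⧸ Submodule.comap L.subtype (L ⊓ L')) ≃+ ZMod d))
    (hquotL' : Nonempty ((↥L' ⧸ Submodule.comap L'.subtype (L ⊓ L')) ≃+ ZMod d)) :
    ∃ e : (↥(dualLattice B L) ⧸
        Submodule.comap (dualLattice B L).subtype L) ≃+
        (↥(dualLattice B L') ⧸ Submodule.comap (dualLattice B L').subtype L'),
      ∀ (x : ↥(dualLattice B L)) (y : ↥(dualLattice B L')),
        (x : V) - (y : V) ∈ L ⊔ L' →
          e (Submodule.Quotient.mk x) = Submodule.Quotient.mk y := by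
  have hL := le_dualLattice_of_even hsymm hLeven
  have hL' := le_dualLattice_of_even hsymm hL'even
  have hN' : (N : ℚ) = (gramMatrix B bL').det := hN.trans hdisc
  have hd0 : (d : ℤ) ≠ 0 := by omega
  have hN0 : N ≠ 0 := by
    rintro rfl
    have := Int.isUnit_iff.mp (isCoprime_zero_right.mp hcop)
    omega
  have hdL : ∀ x ∈ L, (d : ℤ) • x ∈ L' := fun x hx =>
    (smul_mem_of_nonempty_addEquiv_zmod hquotL hx).2
  have hdL' : ∀ x ∈ L', (d : ℤ) • x ∈ L := fun x hx =>
    (smul_mem_of_nonempty_addEquiv_zmod hquotL' hx).1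
  have hsup : dualLattice B L ⊔ (L ⊔ L') = dualLattice B L' ⊔ (L ⊔ L') := by
    refine le_antisymm (sup_le ?_ le_sup_right) (sup_le ?_ le_sup_right)
    · exact (dualLattice_le_dualLattice_sup hL bL hN hd0 hcop hdL').trans
        (sup_le_sup_left le_sup_left _)
    · exact (dualLattice_le_dualLattice_sup hL' bL' hN' hd0 hcop hdL).trans
        (sup_le_sup_left le_sup_right _)
  obtain ⟨e, he⟩ := Submodule.exists_quotientEquiv_of_inf_eq_of_sup_eq
    (dualLattice_inf_sup_eq hL bL hN hN0 hd0 hcop hdL')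
    (sup_comm L L' ▸ dualLattice_inf_sup_eq hL' bL' hN' hN0 hd0 hcop hdL) hsup
  exact ⟨e.toAddEquiv, he⟩

/-- If `L, L'` are even lattices in the same rational quadratic space with
`d = [L : L∩L'] = [L' : L∩L']` coprime to `disc L`, and `disc L = disc L'`, then there
is a natural isomorphism `A_L ≅ A_{L'}`: it sends the class of `x ∈ L^∨` to the class
of `y ∈ L'^∨` whenever `x − y ∈ L + L'` (the composite
`H₁^⊥/H₁ ≅ A_M/(H₁⊕H₂) ≅ H₂^⊥/H₂` of Nikulin's correspondence). -/
theorem stmt8 {ι V : Type*} [Fintype ι] [DecidableEq ι] [AddCommGroup V] [Module ℚ V]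
    (B : V →ₗ[ℚ] V →ₗ[ℚ] ℚ)
    (hsymm : ∀ x y : V, B x y = B y x)
    (hnd : ∀ x : V, (∀ y : V, B x y = 0) → x = 0)
    (L L' : Submodule ℤ V)
    (hLeven : ∀ x ∈ L, ∃ n : ℤ, B x x = 2 * n)
    (hL'even : ∀ x ∈ L', ∃ n : ℤ, B x x = 2 * n)
    (bL : Module.Basis ι ℤ L) (bL' : Module.Basis ι ℤ L')
    (N : ℤ) (hN : (N : ℚ) = (Matrix.of fun i j => B (bL i : V) (bL j : V)).det)
    (hdisc : (Matrix.of fun i j => B (bL i : V) (bL j : V)).det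
      = (Matrix.of fun i j => B (bL' i : V) (bL' j : V)).det)
    (d : ℕ) (hd : 1 < d) (hcop : IsCoprime (d : ℤ) N)
    (hquotL : Nonempty ((↥L ⧸ Submodule.comap L.subtype (L ⊓ L')) ≃+ ZMod d))
    (hquotL' : Nonempty ((↥L' ⧸ Submodule.comap L'.subtype (L ⊓ L')) ≃+ ZMod d)) :
    ∃ e : (↥(dualLattice B L) ⧸
        Submodule.comap (dualLattice B L).subtype L) ≃+
        (↥(dualLattice B L') ⧸ Submodule.comap (dualLattice B L').subtype L'),
      ∀ (x : ↥(dualLattice B L)) (y : ↥(dualLattice B L')),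
        (x : V) - (y : V) ∈ L ⊔ L' →
          e (Submodule.Quotient.mk x) = Submodule.Quotient.mk y :=
  stmt8_general B hsymm L L' hLeven hL'even bL bL' N hN hdisc d hd hcop hquotL hquotL'
end

section
/- Let H₁ = ℤ·(d·e₁) ⊕ ℤ·f₁ and H₂ = ℤ·(d·e₂) ⊕ ℤ·f₂ be index-d sublattices of the hyperbolic-type lattices ℤe₁⊕ℤf₁ and ℤe₂⊕ℤf₂. Consider T = H¹(E₁)⊗H¹(E₂) with Gram matrix as in the tensor product of two rank-2 symplectic/hyperbolic structures giving the quadratic form q(a,b,c,e) = 2(ae − bc) in the basis v₁=e₁⊗e₂, v₂=e₁⊗f₂, v₃=f₁⊗e₂, v₄=f₁⊗f₂ (so (v₁,v₄)=1, (v₂,v₃)=−1, all other pairings 0). Then T' := (1/d)(H₁⊗H₂), generated by dv₁, v₂, v₃, (1/d)v₄, is an even lattice isometric to T and is a d-neighbor of T: T/(T∩T') ≅ T'/(T∩T') ≅ ℤ/dℤ. -/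
/-- The bilinear pairing on `ℚ⁴` with Gram matrix
`[[0,0,0,1],[0,0,−1,0],[0,−1,0,0],[1,0,0,0]]`, i.e. the form of
`T = H¹(E₁) ⊗ H¹(E₂)` with `q(a,b,c,e) = 2(ae − bc)`. -/
def kummerForm (x y : Fin 4 → ℚ) : ℚ :=
  dotProduct x ((!![0,0,0,1; 0,0,-1,0; 0,-1,0,0; 1,0,0,0] : Matrix (Fin 4) (Fin 4) ℚ).mulVec y)

/-- The standard lattice `T = ℤv₁ ⊕ ℤv₂ ⊕ ℤv₃ ⊕ ℤv₄ ⊂ ℚ⁴`. -/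
def kummerT : Submodule ℤ (Fin 4 → ℚ) :=
  Submodule.span ℤ (Set.range fun i : Fin 4 => (Pi.single i 1 : Fin 4 → ℚ))

/-- The lattice `T' = (1/d)(H₁ ⊗ H₂)`, spanned by `dv₁, v₂, v₃, (1/d)v₄`. -/
def kummerT' (d : ℕ) : Submodule ℤ (Fin 4 → ℚ) :=
  Submodule.span ℤ
    {(d : ℚ) • (Pi.single 0 1 : Fin 4 → ℚ), (Pi.single 1 1 : Fin 4 → ℚ),
      (Pi.single 2 1 : Fin 4 → ℚ), ((d : ℚ))⁻¹ • (Pi.single 3 1 : Fin 4 → ℚ)}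

/-! The diagonal map `diag(d, 1, 1, 1/d)` preserves the form, since it only rescales the
paired coordinates `x₀` and `x₃`, by inverse factors; it carries `T` onto `T'`, so `T'` is
isometric to `T`, and even because `T` is. In the integer coordinates `v` of `T`, the
sublattice `T ∩ T'` is cut out by `d ∣ v₀`; in the coordinates of `T'` transported from `T` by
the diagonal map, by `d ∣ v₃`. Either quotient is therefore `ℤ⁴ / {v | d ∣ vᵢ} ≅ ℤ/d`. -/

lemma kummerForm_apply (x y : Fin 4 → ℚ) :
    kummerForm x y = x 0 * y 3 - x 1 * y 2 - x 2 * y 1 + x 3 * y 0 := by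
  simp only [kummerForm, dotProduct, Matrix.mulVec, Fin.sum_univ_four, Matrix.of_apply,
    Matrix.cons_val', Matrix.cons_val_fin_one, Matrix.cons_val_zero, Matrix.cons_val_one,
    Matrix.cons_val]
  ring

def kummerScale (t : ℚˣ) : (Fin 4 → ℚ) ≃ₗ[ℤ] (Fin 4 → ℚ) where
  toFun x := ![t * x 0, x 1, x 2, ↑t⁻¹ * x 3]
  invFun x := ![↑t⁻¹ * x 0, x 1, x 2, t * x 3]
  map_add' x y := by ext i; fin_cases i <;> simp [mul_add]
  map_smul' n x := by ext i; fin_cases i <;> simp [mul_left_comm]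
  left_inv x := by ext i; fin_cases i <;> simp
  right_inv x := by ext i; fin_cases i <;> simp

lemma kummerScale_apply (t : ℚˣ) (x : Fin 4 → ℚ) :
    kummerScale t x = ![t * x 0, x 1, x 2, ↑t⁻¹ * x 3] := rfl

lemma kummerScale_symm (t : ℚˣ) : (kummerScale t).symm = kummerScale t⁻¹ := by
  ext x i; fin_cases i <;> simp [kummerScale]

lemma kummerForm_kummerScale (t : ℚˣ) (x y : Fin 4 → ℚ) :
    kummerForm (kummerScale t x) (kummerScale t y) = kummerForm x y := by
  have := t.ne_zero
  simp only [kummerForm_apply, kummerScale_apply, Matrix.cons_val_zero, Matrix.cons_val_one,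
    Matrix.cons_val, Units.val_inv_eq_inv_val]
  field_simp

def intCastPi : (Fin 4 → ℤ) →ₗ[ℤ] (Fin 4 → ℚ) := (Algebra.linearMap ℤ ℚ).compLeft (Fin 4)

lemma intCastPi_apply (v : Fin 4 → ℤ) (i : Fin 4) : intCastPi v i = v i := rfl

lemma intCastPi_injective : Function.Injective intCastPi :=
  fun v w h => funext fun i => by simpa [intCastPi_apply] using congrFun h i

lemma kummerT_eq_range : kummerT = LinearMap.range intCastPi := by
  rw [LinearMap.range_eq_map, ← (Pi.basisFun ℤ (Fin 4)).span_eq, Submodule.map_span,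
    ← Set.range_comp, kummerT]
  congr
  ext i j
  simp [intCastPi_apply, Pi.single_apply]

lemma mem_kummerT_iff {x : Fin 4 → ℚ} : x ∈ kummerT ↔ ∀ i, ∃ n : ℤ, x i = n := by
  rw [kummerT_eq_range, Classical.skolem]
  exact ⟨fun ⟨v, hv⟩ => ⟨v, fun i => by rw [← hv]; rfl⟩,
    fun ⟨v, hv⟩ => ⟨v, funext fun i => (hv i).symm⟩⟩

lemma kummerT'_eq_map {d : ℕ} (hd : (d : ℚ) ≠ 0) :
    kummerT' d = kummerT.map (kummerScale (Units.mk0 d hd) : (Fin 4 → ℚ) →ₗ[ℤ] (Fin 4 → ℚ)) := by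
  have hbasis : kummerScale (Units.mk0 d hd) ∘ (fun i : Fin 4 => (Pi.single i 1 : Fin 4 → ℚ)) =
      ![(d : ℚ) • Pi.single 0 1, Pi.single 1 1, Pi.single 2 1, (d : ℚ)⁻¹ • Pi.single 3 1] := by
    ext i j
    fin_cases i <;> fin_cases j <;> simp [kummerScale_apply]
  rw [kummerT, Submodule.map_span, ← Set.range_comp, LinearEquiv.coe_coe, hbasis, kummerT']
  simp only [Matrix.range_cons, Matrix.range_empty, Set.union_empty, Set.singleton_union]

lemma exists_intCast_eq_inv_mul_iff {n : ℤ} {d : ℕ} (hd : (d : ℚ) ≠ 0) :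
    (∃ m : ℤ, (d : ℚ)⁻¹ * n = m) ↔ (d : ℤ) ∣ n := by
  simp_rw [inv_mul_eq_iff_eq_mul₀ hd]
  exact ⟨fun ⟨m, hm⟩ => ⟨m, by exact_mod_cast hm⟩, fun ⟨m, hm⟩ => ⟨m, by rw [hm]; push_cast; rfl⟩⟩

noncomputable def kummerTEquivPi : (Fin 4 → ℤ) ≃ₗ[ℤ] kummerT :=
  (LinearEquiv.ofInjective _ intCastPi_injective).trans
    (LinearEquiv.ofEq _ _ kummerT_eq_range.symm)

lemma coe_kummerTEquivPi (v : Fin 4 → ℤ) : (kummerTEquivPi v : Fin 4 → ℚ) = intCastPi v := rfl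

def kummerTEquivT' {d : ℕ} (hd : (d : ℚ) ≠ 0) : kummerT ≃ₗ[ℤ] kummerT' d :=
  ((kummerScale (Units.mk0 d hd)).submoduleMap kummerT).trans
    (LinearEquiv.ofEq _ _ (kummerT'_eq_map hd).symm)

lemma mem_kummerT'_iff {d : ℕ} (hd : (d : ℚ) ≠ 0) {x : Fin 4 → ℚ} :
    x ∈ kummerT' d ↔ kummerScale (Units.mk0 d hd)⁻¹ x ∈ kummerT := by
  rw [kummerT'_eq_map hd, Submodule.mem_map_equiv, kummerScale_symm]

lemma intCastPi_mem_kummerT'_iff {d : ℕ} (hd : (d : ℚ) ≠ 0) (v : Fin 4 → ℤ) :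
    intCastPi v ∈ kummerT' d ↔ (d : ℤ) ∣ v 0 := by
  rw [mem_kummerT'_iff hd, mem_kummerT_iff]
  simp only [kummerScale_apply, Units.val_inv_eq_inv_val, Units.val_mk0, intCastPi_apply, inv_inv,
    Fin.forall_fin_succ, Matrix.cons_val_zero, Matrix.cons_val_succ, Matrix.cons_val_fin_one,
    Int.cast_inj, exists_eq', exists_intCast_eq_inv_mul_iff hd, forall_const, true_and,
    and_iff_left_iff_imp]
  exact fun _ => ⟨d * v 3, by push_cast; ring⟩

lemma kummerScale_intCastPi_mem_kummerT_iff {d : ℕ} (hd : (d : ℚ) ≠ 0) (v : Fin 4 → ℤ) :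
    kummerScale (Units.mk0 d hd) (intCastPi v) ∈ kummerT ↔ (d : ℤ) ∣ v 3 := by
  rw [mem_kummerT_iff]
  simp only [kummerScale_apply, Units.val_inv_eq_inv_val, Units.val_mk0, intCastPi_apply,
    Fin.forall_fin_succ, Matrix.cons_val_zero, Matrix.cons_val_succ, Matrix.cons_val_fin_one,
    Int.cast_inj, exists_eq', exists_intCast_eq_inv_mul_iff hd, forall_const, true_and,
    and_iff_right_iff_imp]
  exact fun _ => ⟨d * v 0, by push_cast; ring⟩

def intCoordMod (d : ℕ) {ι : Type*} (i : ι) : (ι → ℤ) →ₗ[ℤ] ZMod d :=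
  (Int.castRingHom (ZMod d)).toIntAlgHom.toLinearMap ∘ₗ LinearMap.proj i

lemma intCoordMod_surjective (d : ℕ) {ι : Type*} (i : ι) :
    Function.Surjective (intCoordMod d i) := by
  intro z
  obtain ⟨n, rfl⟩ := ZMod.intCast_surjective z
  exact ⟨fun _ => n, rfl⟩

lemma mem_ker_intCoordMod {d : ℕ} {ι : Type*} {i : ι} {v : ι → ℤ} :
    v ∈ LinearMap.ker (intCoordMod d i) ↔ (d : ℤ) ∣ v i :=
  ZMod.intCast_zmod_eq_zero_iff_dvd _ _

lemma nonempty_quotient_addEquiv_zmod {M : Type*} [AddCommGroup M] {L N : Submodule ℤ M}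
    {ι : Type*} (f : (ι → ℤ) ≃ₗ[ℤ] L) (d : ℕ) (i : ι) (hf : ∀ v, (f v : M) ∈ N ↔ (d : ℤ) ∣ v i) :
    Nonempty ((L ⧸ N.comap L.subtype) ≃+ ZMod d) := by
  have hker :
      (LinearMap.ker (intCoordMod d i)).map (f : (ι → ℤ) →ₗ[ℤ] L) = N.comap L.subtype := by
    rw [Submodule.map_equiv_eq_comap_symm]
    ext x
    rw [Submodule.mem_comap, LinearEquiv.coe_coe, mem_ker_intCoordMod, Submodule.mem_comap,
      Submodule.subtype_apply, ← hf, f.apply_symm_apply]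
  exact ⟨((Submodule.Quotient.equiv _ _ f hker).symm.trans
    ((intCoordMod d i).quotKerEquivOfSurjective (intCoordMod_surjective d i))).toAddEquiv⟩

lemma exists_kummerForm_self_eq_two_mul {x : Fin 4 → ℚ} (hx : x ∈ kummerT) :
    ∃ n : ℤ, kummerForm x x = 2 * n := by
  obtain ⟨v, rfl⟩ := kummerT_eq_range ▸ hx
  exact ⟨v 0 * v 3 - v 1 * v 2, by simp [kummerForm_apply, intCastPi_apply]; ring⟩

lemma exists_kummerForm_eq_intCast {x y : Fin 4 → ℚ} (hx : x ∈ kummerT) (hy : y ∈ kummerT) :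
    ∃ n : ℤ, kummerForm x y = n := by
  obtain ⟨v, rfl⟩ := kummerT_eq_range ▸ hx
  obtain ⟨w, rfl⟩ := kummerT_eq_range ▸ hy
  exact ⟨v 0 * w 3 - v 1 * w 2 - v 2 * w 1 + v 3 * w 0,
    by simp [kummerForm_apply, intCastPi_apply]⟩

/-- For `d > 1`, the lattice `T' = (1/d)(H₁⊗H₂)` spanned by
`dv₁, v₂, v₃, (1/d)v₄` inside `T ⊗ ℚ` is an even (integral) lattice isometric to `T`,
and is a `d`-neighbor of `T`: `T/(T∩T') ≅ T'/(T∩T') ≅ ℤ/dℤ`. -/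
theorem stmt14 (d : ℕ) (hd : 1 < d) :
    (∀ x ∈ kummerT' d, ∃ n : ℤ, kummerForm x x = 2 * n) ∧
    (∀ x ∈ kummerT' d, ∀ y ∈ kummerT' d, ∃ n : ℤ, kummerForm x y = (n : ℚ)) ∧
    (∃ e : ↥(kummerT' d) ≃ₗ[ℤ] ↥kummerT,
      ∀ x y : ↥(kummerT' d),
        kummerForm (x : Fin 4 → ℚ) (y : Fin 4 → ℚ)
          = kummerForm (e x : Fin 4 → ℚ) (e y : Fin 4 → ℚ)) ∧
    Nonempty ((↥kummerT ⧸ Submodule.comap kummerT.subtype (kummerT ⊓ kummerT' d))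
      ≃+ ZMod d) ∧
    Nonempty ((↥(kummerT' d) ⧸
        Submodule.comap (kummerT' d).subtype (kummerT ⊓ kummerT' d)) ≃+ ZMod d) := by
  have hd0 : (d : ℚ) ≠ 0 := Nat.cast_ne_zero.mpr (by omega)
  set e := kummerTEquivT' hd0
  have he (x y : kummerT) : kummerForm (e x) (e y) = kummerForm x y :=
    kummerForm_kummerScale _ _ _
  refine ⟨fun x hx => ?_, fun x hx y hy => ?_, ⟨e.symm, fun x y => ?_⟩, ?_, ?_⟩
  · obtain ⟨x, hxT, rfl⟩ := kummerT'_eq_map hd0 ▸ hx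
    simpa only [LinearEquiv.coe_coe, kummerForm_kummerScale] using
      exists_kummerForm_self_eq_two_mul hxT
  · obtain ⟨x, hxT, rfl⟩ := kummerT'_eq_map hd0 ▸ hx
    obtain ⟨y, hyT, rfl⟩ := kummerT'_eq_map hd0 ▸ hy
    simpa only [LinearEquiv.coe_coe, kummerForm_kummerScale] using
      exists_kummerForm_eq_intCast hxT hyT
  · rw [← he, e.apply_symm_apply, e.apply_symm_apply]
  · refine nonempty_quotient_addEquiv_zmod kummerTEquivPi d 0 fun v => ?_
    rw [Submodule.mem_inf, coe_kummerTEquivPi, intCastPi_mem_kummerT'_iff hd0]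
    exact and_iff_right (kummerT_eq_range ▸ LinearMap.mem_range_self _ _)
  · refine nonempty_quotient_addEquiv_zmod (kummerTEquivPi.trans e) d 3 fun v => ?_
    rw [Submodule.mem_inf, and_iff_left (Submodule.coe_mem _)]
    exact kummerScale_intCastPi_mem_kummerT_iff hd0 v
end
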